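/- arXiv:0807.1372 — 2 statements merged into one kernel-verified Lean document; each statement's English description precedes it below -/
import Mathlib

section
/- The capacity of the additive matrix channel Y = X + W, where X, Y ∈ F_q^{n×m} and W is uniform over the set of n×m matrices of rank t (independent of X), equals nm - log_q |T_{n×m,t}|, where |T_{n×m,t}| is the number of n×m matrices of rank t. The capacity is achieved by the uniform input distribution. -/
/-!
For additive noise `Y = X + W` on a finite group `G` with `W` uniform on a set `S`, every
transition probability `K x y` is `0` or `c = 1/|S|`. Write `I(X;Y) = ∑ w log (K/r)` with joint
law `w x y = p x K x y` and output law `r`. Concavity of the logarithm bounds it by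
`log ∑ w K / r`, and `K² = c K` collapses that sum to `c · #{y | r y ≠ 0} ≤ |G|/|S|`.
The uniform input makes the output uniform, and then `K / r` is `c |G|` wherever `w ≠ 0`, so the
bound is attained. For the matrix channel `S` is the set of rank-`t` matrices, nonempty as
`t ≤ min n m`.
-/

open scoped BigOperators

/-- Mutual information (logarithm base `b`) between the input and output of a discrete
memoryless channel with finite input alphabet `α`, finite output alphabet `β`, transition
probabilities `K` and input distribution `p`. -/
noncomputable def mutualInfoB {α β : Type*} [Fintype α] [Fintype β]
    (b : ℝ) (p : α → ℝ) (K : α → β → ℝ) : ℝ :=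
  ∑ x : α, ∑ y : β, p x * K x y *
    Real.logb b (K x y / ∑ x' : α, p x' * K x' y)

/-- The capacity (in base-`b` units) of a discrete channel with transition probabilities `K`:
the supremum of the mutual information over all input distributions. -/
noncomputable def capacityB {α β : Type*} [Fintype α] [Fintype β]
    (b : ℝ) (K : α → β → ℝ) : ℝ :=
  sSup {c : ℝ | ∃ p : α → ℝ, (∀ x, 0 ≤ p x) ∧ (∑ x : α, p x) = 1 ∧ c = mutualInfoB b p K}


open Finset

theorem Real.sum_mul_logb_le_logb_sum_mul {ι : Type*} (s : Finset ι) {b : ℝ} (hb : 1 < b)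
    {w g : ι → ℝ} (hw₀ : ∀ i ∈ s, 0 ≤ w i) (hw₁ : ∑ i ∈ s, w i = 1) (hg : ∀ i ∈ s, 0 < g i) :
    ∑ i ∈ s, w i * Real.logb b (g i) ≤ Real.logb b (∑ i ∈ s, w i * g i) := by
  have hjensen := strictConcaveOn_log_Ioi.concaveOn.le_map_sum hw₀ hw₁ hg
  simp only [smul_eq_mul] at hjensen
  simp only [Real.logb, ← mul_div_assoc, ← sum_div]
  exact div_le_div_of_nonneg_right hjensen (Real.log_pos hb).le

section Channel

variable {α β : Type*} [Fintype α] [Fintype β] {b c : ℝ} {K : α → β → ℝ}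

theorem capacityB_eq_mutualInfoB_of_le {p₀ : α → ℝ} (hp₀ : ∀ x, 0 ≤ p₀ x)
    (hp₀₁ : ∑ x, p₀ x = 1)
    (h : ∀ p : α → ℝ, (∀ x, 0 ≤ p x) → ∑ x, p x = 1 → mutualInfoB b p K ≤ mutualInfoB b p₀ K) :
    capacityB b K = mutualInfoB b p₀ K :=
  IsGreatest.csSup_eq ⟨⟨p₀, hp₀, hp₀₁, rfl⟩, by rintro _ ⟨p, hp, hp₁, rfl⟩; exact h p hp hp₁⟩

theorem mutualInfoB_le_logb_mul_card (hb : 1 < b) (hc : 0 ≤ c) {p : α → ℝ}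
    (hp : ∀ x, 0 ≤ p x) (hp₁ : ∑ x, p x = 1) (hK : ∀ x y, K x y = 0 ∨ K x y = c)
    (hK₁ : ∀ x, ∑ y, K x y = 1) :
    mutualInfoB b p K ≤ Real.logb b (c * Fintype.card β) := by
  set r : β → ℝ := fun y => ∑ x, p x * K x y
  set w : α × β → ℝ := fun z => p z.1 * K z.1 z.2
  set g : α × β → ℝ := fun z => K z.1 z.2 / r z.2
  set s := univ.filter fun z => w z ≠ 0
  have hK₀ : ∀ x y, 0 ≤ K x y := fun x y => by rcases hK x y with h | h <;> rw [h]; exact hc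
  have hKK : ∀ x y, K x y * K x y = c * K x y := fun x y => by
    rcases hK x y with h | h <;> rw [h]; simp
  have hw₀ : ∀ z, 0 ≤ w z := fun z => mul_nonneg (hp _) (hK₀ _ _)
  have hw_le_r : ∀ z, w z ≤ r z.2 := fun z =>
    single_le_sum (f := fun x => p x * K x z.2) (fun x _ => mul_nonneg (hp x) (hK₀ _ _))
      (mem_univ z.1)
  have sum_filter (f : α × β → ℝ) : ∑ z ∈ s, w z * f z = ∑ z, w z * f z :=
    sum_filter_of_ne fun z _ h => left_ne_zero_of_mul h
  have hI : mutualInfoB b p K = ∑ z ∈ s, w z * Real.logb b (g z) := by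
    rw [sum_filter, mutualInfoB, ← Fintype.sum_prod_type']
  have hw₁ : ∑ z ∈ s, w z = 1 := by
    rw [sum_filter_ne_zero, Fintype.sum_prod_type]
    simpa only [w, ← mul_sum, hK₁, mul_one] using hp₁
  have hw_pos : ∀ z ∈ s, 0 < w z := fun z hz => (hw₀ z).lt_of_ne (mem_filter.1 hz).2.symm
  have hg : ∀ z ∈ s, 0 < g z := fun z hz =>
    div_pos (pos_of_mul_pos_right (hw_pos z hz) (hp _)) ((hw_pos z hz).trans_le (hw_le_r z))
  have hsum : ∑ z ∈ s, w z * g z ≤ c * Fintype.card β := by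
    have hwg : ∀ z, w z * g z = c * (w z / r z.2) := fun z => by
      simp only [w, g]; rw [mul_div_assoc', mul_assoc, hKK]; ring
    calc ∑ z ∈ s, w z * g z = ∑ y, c * (r y / r y) := by
          rw [sum_filter, Fintype.sum_prod_type_right]
          simp only [hwg, ← mul_sum, ← sum_div]; rfl
      _ ≤ ∑ _y : β, c * 1 :=
          sum_le_sum fun y _ => mul_le_mul_of_nonneg_left (div_self_le_one _) hc
      _ = c * Fintype.card β := by simp [mul_comm]
  rw [hI]
  refine (Real.sum_mul_logb_le_logb_sum_mul s hb (fun z _ => hw₀ z) hw₁ hg).trans ?_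
  have hs : s.Nonempty := nonempty_of_sum_ne_zero (by rw [hw₁]; exact one_ne_zero)
  exact Real.logb_le_logb_of_le hb (sum_pos (fun z hz => mul_pos (hw_pos z hz) (hg z hz)) hs) hsum

theorem mutualInfoB_uniform_eq_logb_mul_card [Nonempty α] (hK : ∀ x y, K x y = 0 ∨ K x y = c)
    (hK₁ : ∀ x, ∑ y, K x y = 1) (hK₁' : ∀ y, ∑ x, K x y = 1) :
    mutualInfoB b (fun _ => (Fintype.card α : ℝ)⁻¹) K = Real.logb b (c * Fintype.card α) := by
  set N : ℝ := (Fintype.card α : ℝ)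
  have hN : N ≠ 0 := Nat.cast_ne_zero.2 Fintype.card_ne_zero
  have hterm : ∀ x y, N⁻¹ * K x y * Real.logb b (K x y / ∑ x', N⁻¹ * K x' y) =
      N⁻¹ * K x y * Real.logb b (c * N) := fun x y => by
    rw [← mul_sum, hK₁' y, mul_one, div_inv_eq_mul]
    rcases hK x y with h | h <;> rw [h]; simp
  calc mutualInfoB b (fun _ => N⁻¹) K = ∑ x, ∑ y, N⁻¹ * K x y * Real.logb b (c * N) :=
        sum_congr rfl fun x _ => sum_congr rfl fun y _ => hterm x y
    _ = Real.logb b (c * N) := by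
        simp only [← sum_mul, ← mul_sum, hK₁, mul_one, sum_const, card_univ, nsmul_eq_mul]
        rw [mul_inv_cancel₀ hN, one_mul]

end Channel

theorem sum_ite_one_div_natCard {ι : Type*} [Fintype ι] {P : ι → Prop} [DecidablePred P]
    (hP : ∃ w, P w) :
    ∑ w, (if P w then 1 / (Nat.card {w // P w} : ℝ) else 0) = 1 := by
  have : Nonempty {w // P w} := nonempty_subtype.2 hP
  rw [sum_ite, sum_const_zero, add_zero, sum_const, nsmul_eq_mul, ← Fintype.card_subtype,
    ← Nat.card_eq_fintype_card]
  exact mul_one_div_cancel (Nat.cast_ne_zero.2 Nat.card_pos.ne')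

section AdditiveNoise

variable {G : Type*} [AddGroup G] [Fintype G] (P : G → Prop) [DecidablePred P]

noncomputable def uniformNoiseChannel (x y : G) : ℝ :=
  if P (y - x) then 1 / (Nat.card {w // P w} : ℝ) else 0

variable {P}

theorem uniformNoiseChannel_eq_zero_or (x y : G) :
    uniformNoiseChannel P x y = 0 ∨ uniformNoiseChannel P x y = 1 / Nat.card {w // P w} := by
  unfold uniformNoiseChannel; split_ifs <;> simp

theorem sum_uniformNoiseChannel_right (hP : ∃ w, P w) (x : G) :
    ∑ y, uniformNoiseChannel P x y = 1 :=
  ((Equiv.subRight x).sum_comp _).trans (sum_ite_one_div_natCard hP)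

theorem sum_uniformNoiseChannel_left (hP : ∃ w, P w) (y : G) :
    ∑ x, uniformNoiseChannel P x y = 1 :=
  ((Equiv.subLeft y).sum_comp _).trans (sum_ite_one_div_natCard hP)

theorem mutualInfoB_uniform_uniformNoiseChannel (hP : ∃ w, P w) :
    mutualInfoB b (fun _ => (Fintype.card G : ℝ)⁻¹) (uniformNoiseChannel P) =
      Real.logb b (Fintype.card G) - Real.logb b (Nat.card {w // P w}) := by
  have : Nonempty {w // P w} := nonempty_subtype.2 hP
  rw [mutualInfoB_uniform_eq_logb_mul_card uniformNoiseChannel_eq_zero_or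
    (sum_uniformNoiseChannel_right hP) (sum_uniformNoiseChannel_left hP), one_div_mul_eq_div,
    Real.logb_div (Nat.cast_ne_zero.2 Fintype.card_ne_zero) (Nat.cast_ne_zero.2 Nat.card_pos.ne')]

theorem capacityB_uniformNoiseChannel (hb : 1 < b) (hP : ∃ w, P w) :
    capacityB b (uniformNoiseChannel P) =
      mutualInfoB b (fun _ => (Fintype.card G : ℝ)⁻¹) (uniformNoiseChannel P) := by
  refine capacityB_eq_mutualInfoB_of_le (fun _ => by positivity) (by simp) fun p hp hp₁ => ?_
  rw [mutualInfoB_uniform_eq_logb_mul_card uniformNoiseChannel_eq_zero_or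
    (sum_uniformNoiseChannel_right hP) (sum_uniformNoiseChannel_left hP)]
  exact mutualInfoB_le_logb_mul_card hb (by positivity) hp hp₁ uniformNoiseChannel_eq_zero_or
    (sum_uniformNoiseChannel_right hP)

end AdditiveNoise

open Matrix in
theorem Matrix.exists_rank_eq {F : Type*} [Field F] {n m t : ℕ} (htn : t ≤ n) (htm : t ≤ m) :
    ∃ A : Matrix (Fin n) (Fin m) F, A.rank = t := by
  let E : (k : ℕ) → t ≤ k → Matrix (Fin k) (Fin t) F :=
    fun k h => (1 : Matrix (Fin k) (Fin k) F).submatrix id (Fin.castLE h)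
  have hE : ∀ k (h : t ≤ k), (E k h)ᵀ * E k h = 1 := fun k h => by
    simp only [E, transpose_submatrix, transpose_one, ← submatrix_mul _ _ _ _ _ Function.bijective_id,
      Matrix.mul_one, submatrix_one _ (Fin.castLE_injective h)]
  refine ⟨E n htn * (E m htm)ᵀ, le_antisymm ?_ ?_⟩
  · exact (rank_mul_le_left _ _).trans (rank_le_width _)
  · calc t = ((E n htn)ᵀ * (E n htn * (E m htm)ᵀ) * E m htm).rank := by
          rw [← Matrix.mul_assoc, hE, Matrix.one_mul, ← transpose_transpose (E m htm),
            ← transpose_mul, transpose_transpose, hE, transpose_one, rank_one, Fintype.card_fin]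
      _ ≤ _ := (rank_mul_le_left _ _).trans (rank_mul_le_right _ _)

theorem logb_card_matrix {F : Type*} [Fintype F] [Nontrivial F] (n m : ℕ) :
    Real.logb (Fintype.card F) (Fintype.card (Matrix (Fin n) (Fin m) F)) = n * m := by
  have hq : (1 : ℝ) < Fintype.card F := by exact_mod_cast Fintype.one_lt_card
  rw [Fintype.card_congr Matrix.of.symm]
  simp [Real.logb_pow, Real.logb_self_eq_one hq]

/-- the capacity (in `q`-ary units) of the additive matrix channel `Y = X + W`,
with `W` uniform over the `n × m` matrices of rank `t` over `F_q` and independent of `X`,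
equals `nm - log_q |T_{n×m,t}|`; moreover the uniform input distribution achieves it. -/
theorem stmt_8 {F : Type*} [Field F] [Fintype F] (n m t : ℕ) (ht : t ≤ min n m) :
    capacityB (Fintype.card F)
        (fun X Y : Matrix (Fin n) (Fin m) F =>
          if (Y - X).rank = t
          then 1 / (Nat.card {W : Matrix (Fin n) (Fin m) F // W.rank = t} : ℝ)
          else 0)
      = (n : ℝ) * m -
          Real.logb (Fintype.card F)
            (Nat.card {W : Matrix (Fin n) (Fin m) F // W.rank = t}) ∧
    mutualInfoB (Fintype.card F)
        (fun _ : Matrix (Fin n) (Fin m) F =>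
          (Fintype.card (Matrix (Fin n) (Fin m) F) : ℝ)⁻¹)
        (fun X Y : Matrix (Fin n) (Fin m) F =>
          if (Y - X).rank = t
          then 1 / (Nat.card {W : Matrix (Fin n) (Fin m) F // W.rank = t} : ℝ)
          else 0)
      = (n : ℝ) * m -
          Real.logb (Fintype.card F)
            (Nat.card {W : Matrix (Fin n) (Fin m) F // W.rank = t}) := by
  obtain ⟨A, hA⟩ := Matrix.exists_rank_eq (F := F) (le_min_iff.1 ht).1 (le_min_iff.1 ht).2
  have hq : (1 : ℝ) < Fintype.card F := by exact_mod_cast Fintype.one_lt_card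
  have hcap := capacityB_uniformNoiseChannel (b := Fintype.card F)
    (P := fun W : Matrix (Fin n) (Fin m) F => W.rank = t) hq ⟨A, hA⟩
  have huniform := mutualInfoB_uniform_uniformNoiseChannel (b := Fintype.card F)
    (P := fun W : Matrix (Fin n) (Fin m) F => W.rank = t) ⟨A, hA⟩
  rw [logb_card_matrix] at huniform
  exact ⟨hcap.trans huniform, huniform⟩
end

section
/- The capacity of the additive matrix channel, C = nm - log_q |T_{n×m,t}|, satisfies C = (m-t)(n-t) + log_q ∏_{i=0}^{t-1} (1-q^{i-t})/((1-q^{i-n})(1-q^{i-m})). In particular, for fixed n, m, t, lim_{q→∞} C = (m-t)(n-t). -/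
open scoped BigOperators

/-- The capacity of the additive matrix channel (`Y = X + W`, `W` uniform of rank `t`),
in `q`-ary units: `C = nm - log_q |T_{n×m,t}|`. -/
noncomputable def amcCapacity (F : Type) [Field F] [Fintype F] (n m t : ℕ) : ℝ :=
  (n : ℝ) * m -
    Real.logb (Fintype.card F)
      (Nat.card {W : Matrix (Fin n) (Fin m) F // W.rank = t})

/-!
Every matrix `W` of rank `t` factors as `W = A B` with `A` having `t` independent columns and
`B` having `t` independent rows, and the factorizations of a fixed `W` correspond bijectively to
the ordered bases `A` of its column space, of which there are `∏_{i<t} (q^t - q^i)`. Counting the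
pairs `(A, B)` in two ways gives
`|T_{n×m,t}| · ∏ (q^t - q^i) = ∏ (q^n - q^i) · ∏ (q^m - q^i)`,
and pulling `q^k` out of each factor `q^k - q^i` yields the closed form. As `q → ∞` the remaining
product tends to `1`, so its logarithm to base `q` tends to `0`.
-/

open Matrix Module Submodule

theorem Nat.card_eq_card_mul_of_card_fiber {α β : Type*} [Finite α] [Finite β] (f : α → β)
    {k : ℕ} (h : ∀ b, Nat.card {a // f a = b} = k) : Nat.card α = Nat.card β * k := by
  have := Fintype.ofFinite β
  rw [← Nat.card_congr (Equiv.sigmaFiberEquiv f), Nat.card_sigma,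
    Finset.sum_congr rfl fun b _ => h b, Finset.sum_const, Finset.card_univ, smul_eq_mul,
    Nat.card_eq_fintype_card]

namespace Matrix

variable {F : Type*} [Field F] {m n ι : Type*}

theorem rank_eq_card_iff_linearIndependent_row [Fintype m] [Fintype n] (A : Matrix m n F) :
    A.rank = Fintype.card m ↔ LinearIndependent F A.row := by
  rw [rank_eq_finrank_span_row, linearIndependent_iff_card_eq_finrank_span, Set.finrank, eq_comm]

theorem range_mulVecLin_mul_of_rank_eq [Fintype n] [Fintype ι] (A : Matrix m ι F)
    (B : Matrix ι n F) (h : (A * B).rank = Fintype.card ι) :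
    LinearMap.range (A * B).mulVecLin = LinearMap.range A.mulVecLin := by
  refine eq_of_le_of_finrank_le ?_ ?_
  · rw [mulVecLin_mul]
    exact LinearMap.range_comp_le_range _ _
  · change A.rank ≤ (A * B).rank
    exact h ▸ A.rank_le_card_width

theorem rank_mul_eq_left_of_rank_eq_card [Fintype n] [Fintype ι] (A : Matrix m ι F)
    {B : Matrix ι n F} (hB : B.rank = Fintype.card ι) : (A * B).rank = A.rank := by
  have hsurj : LinearMap.range B.mulVecLin = ⊤ :=
    eq_top_of_finrank_eq (hB.trans (finrank_fintype_fun_eq_card F).symm)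
  rw [rank, mulVecLin_mul, LinearMap.range_comp_of_range_eq_top _ hsurj]
  rfl

theorem mul_left_cancel_of_linearIndependent_col [Fintype ι] {A : Matrix m ι F}
    (hA : LinearIndependent F A.col) {B B' : Matrix ι n F} (h : A * B = A * B') : B = B' :=
  ext_col fun j => mulVec_injective_iff.2 hA congr(($h).col j)

variable {t : ℕ}

def ofColsMulOfRows (a : Fin t → m → F) (b : Fin t → n → F) : Matrix m n F :=
  (of a)ᵀ * of b

theorem rank_ofColsMulOfRows [Fintype m] [Fintype n] {a : Fin t → m → F} {b : Fin t → n → F}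
    (ha : LinearIndependent F a) (hb : LinearIndependent F b) :
    (ofColsMulOfRows a b).rank = t := by
  rw [ofColsMulOfRows, rank_mul_eq_left_of_rank_eq_card _
      ((rank_eq_card_iff_linearIndependent_row (of b)).2 hb),
    rank_transpose, (rank_eq_card_iff_linearIndependent_row (of a)).2 ha, Fintype.card_fin]

theorem range_mulVecLin_ofColsMulOfRows [Fintype n] {a : Fin t → m → F} {b : Fin t → n → F}
    (h : (ofColsMulOfRows a b).rank = t) :
    LinearMap.range (ofColsMulOfRows a b).mulVecLin = span F (Set.range a) := by
  rw [ofColsMulOfRows, range_mulVecLin_mul_of_rank_eq _ _ (by rw [Fintype.card_fin]; exact h),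
    range_mulVecLin]
  rfl

theorem exists_linearIndependent_ofColsMulOfRows_eq [Fintype m] [Fintype n] {W : Matrix m n F}
    (hW : W.rank = t) {a : Fin t → m → F}
    (ha : span F (Set.range a) = LinearMap.range W.mulVecLin) :
    ∃ b : Fin t → n → F, LinearIndependent F b ∧ ofColsMulOfRows a b = W := by
  classical
  have hcol (j : n) : W.col j ∈ LinearMap.range (of a)ᵀ.mulVecLin := by
    rw [range_mulVecLin]
    exact ha ▸ ⟨Pi.single j 1, mulVec_single_one W j⟩
  choose v hv using fun j => LinearMap.mem_range.1 (hcol j)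
  let B : Matrix (Fin t) n F := (of v)ᵀ
  have hAB : ofColsMulOfRows a B.row = W := ext_col hv
  refine ⟨B.row, ?_, hAB⟩
  rw [← rank_eq_card_iff_linearIndependent_row, Fintype.card_fin]
  exact le_antisymm (rank_le_card_height B |>.trans_eq (Fintype.card_fin t))
    (hW.symm.trans_le (hAB ▸ rank_mul_le_right (of a)ᵀ B))

theorem card_fiber_ofColsMulOfRows [Fintype m] [Fintype n] (W : Matrix m n F) (hW : W.rank = t) :
    Nat.card {p : {a : Fin t → m → F // LinearIndependent F a} ×
        {b : Fin t → n → F // LinearIndependent F b} // ofColsMulOfRows p.1.1 p.2.1 = W} =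
      Nat.card {s : Fin t → LinearMap.range W.mulVecLin // LinearIndependent F s} := by
  let R := LinearMap.range W.mulVecLin
  have mem_range {a : Fin t → m → F} {b : Fin t → n → F} (hab : ofColsMulOfRows a b = W)
      (i : Fin t) : a i ∈ R := by
    change a i ∈ LinearMap.range W.mulVecLin
    rw [← hab, range_mulVecLin_ofColsMulOfRows (hab ▸ hW)]
    exact subset_span ⟨i, rfl⟩
  refine Nat.card_eq_of_bijective
    (fun p => ⟨fun i => ⟨p.1.1.1 i, mem_range p.2 i⟩, .of_comp R.subtype p.1.1.2⟩) ⟨?_, ?_⟩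
  · rintro ⟨⟨⟨a, ha⟩, ⟨b, hb⟩⟩, hab⟩ ⟨⟨⟨a', ha'⟩, ⟨b', hb'⟩⟩, hab'⟩ h
    obtain rfl : a = a' :=
      funext fun i => congrArg Subtype.val (congrFun (congrArg Subtype.val h) i)
    obtain rfl : b = b' := mul_left_cancel_of_linearIndependent_col ha (hab.trans hab'.symm)
    rfl
  · rintro ⟨s, hs⟩
    let a : Fin t → m → F := fun i => s i
    have ha : LinearIndependent F a := hs.map' R.subtype (ker_subtype R)
    have hspan : span F (Set.range a) = R := by
      refine eq_of_le_of_finrank_le (span_le.2 (Set.range_subset_iff.2 fun i => (s i).2)) ?_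
      rw [finrank_span_eq_card ha, Fintype.card_fin, ← hW]
      rfl
    obtain ⟨b, hb, hab⟩ := exists_linearIndependent_ofColsMulOfRows_eq hW hspan
    exact ⟨⟨⟨⟨a, ha⟩, ⟨b, hb⟩⟩, hab⟩, rfl⟩

theorem card_rank_eq_mul_prod [Fintype F] [Fintype m] [Fintype n]
    (hm : t ≤ Fintype.card m) (hn : t ≤ Fintype.card n) :
    Nat.card {W : Matrix m n F // W.rank = t} *
        ∏ i : Fin t, (Fintype.card F ^ t - Fintype.card F ^ (i : ℕ)) =
      (∏ i : Fin t, (Fintype.card F ^ Fintype.card m - Fintype.card F ^ (i : ℕ))) *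
        ∏ i : Fin t, (Fintype.card F ^ Fintype.card n - Fintype.card F ^ (i : ℕ)) := by
  let μ (p : {a : Fin t → m → F // LinearIndependent F a} ×
      {b : Fin t → n → F // LinearIndependent F b}) : {W : Matrix m n F // W.rank = t} :=
    ⟨ofColsMulOfRows p.1.1 p.2.1, rank_ofColsMulOfRows p.1.2 p.2.2⟩
  have hfiber (W : {W : Matrix m n F // W.rank = t}) :
      Nat.card {p // μ p = W} = ∏ i : Fin t, (Fintype.card F ^ t - Fintype.card F ^ (i : ℕ)) := by
    have hrank : finrank F (LinearMap.range W.1.mulVecLin) = t := W.2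
    simp_rw [μ, Subtype.ext_iff]
    rw [card_fiber_ofColsMulOfRows W.1 W.2, card_linearIndependent hrank.ge, hrank]
  rw [← Nat.card_eq_card_mul_of_card_fiber μ hfiber, Nat.card_prod,
    card_linearIndependent (by rwa [finrank_fintype_fun_eq_card]),
    card_linearIndependent (by rwa [finrank_fintype_fun_eq_card]),
    finrank_fintype_fun_eq_card, finrank_fintype_fun_eq_card]

end Matrix

open Finset Real Filter Topology

theorem Nat.cast_prod_fin_pow_sub_pow {R : Type*} [CommRing R] {q : ℕ} (hq : 0 < q) {k t : ℕ}
    (h : t ≤ k) :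
    ((∏ i : Fin t, (q ^ k - q ^ (i : ℕ)) : ℕ) : R) = ∏ i ∈ range t, ((q : R) ^ k - (q : R) ^ i) := by
  rw [Nat.cast_prod, Fin.prod_univ_eq_prod_range (fun i => ((q ^ k - q ^ i : ℕ) : R))]
  refine prod_congr rfl fun i hi => ?_
  rw [Nat.cast_sub (Nat.pow_le_pow_right hq ((mem_range.1 hi).le.trans h)), Nat.cast_pow,
    Nat.cast_pow]

theorem prod_range_pow_sub_pow {K : Type*} [Field K] {q : K} (hq : q ≠ 0) (k t : ℕ) :
    ∏ i ∈ range t, (q ^ k - q ^ i) = q ^ (k * t) * ∏ i ∈ range t, (1 - q ^ ((i : ℤ) - k)) := by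
  rw [pow_mul, ← card_range t, ← prod_const, card_range, ← prod_mul_distrib]
  refine prod_congr rfl fun i _ => ?_
  rw [zpow_sub₀ hq, zpow_natCast, zpow_natCast]
  field_simp

theorem prod_range_one_sub_zpow_pos {K : Type*} [Field K] [LinearOrder K] [IsStrictOrderedRing K]
    {q : K} (hq : 1 < q) {k t : ℕ} (h : t ≤ k) :
    0 < ∏ i ∈ range t, (1 - q ^ ((i : ℤ) - k)) :=
  prod_pos fun i hi => sub_pos.2 (zpow_lt_one_of_neg₀ hq (by have := mem_range.1 hi; omega))

theorem amcCapacity_eq (F : Type) [Field F] [Fintype F] {n m t : ℕ} (htn : t ≤ n) (htm : t ≤ m) :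
    amcCapacity F n m t
      = ((m : ℝ) - t) * ((n : ℝ) - t) +
          logb (Fintype.card F)
            (∏ i ∈ range t,
              (1 - (Fintype.card F : ℝ) ^ ((i : ℤ) - t)) /
                ((1 - (Fintype.card F : ℝ) ^ ((i : ℤ) - n)) *
                  (1 - (Fintype.card F : ℝ) ^ ((i : ℤ) - m)))) := by
  set q : ℝ := (Fintype.card F : ℝ)
  have hq : 1 < q := Nat.one_lt_cast.2 Fintype.one_lt_card
  set P : ℕ → ℝ := fun k => ∏ i ∈ range t, (1 - q ^ ((i : ℤ) - k))
  have hPpos {k : ℕ} (h : t ≤ k) : 0 < P k := prod_range_one_sub_zpow_pos hq h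
  have hqpow (k : ℕ) : 0 < q ^ (k * t) := pow_pos (by linarith) _
  set N : ℝ := (Nat.card {W : Matrix (Fin n) (Fin m) F // W.rank = t} : ℝ)
  have hcount : N * (q ^ (t * t) * P t) = q ^ (n * t) * P n * (q ^ (m * t) * P m) := by
    have := congrArg (Nat.cast (R := ℝ)) (card_rank_eq_mul_prod (F := F) (m := Fin n)
      (n := Fin m) (t := t) (by rwa [Fintype.card_fin]) (by rwa [Fintype.card_fin]))
    simp only [Fintype.card_fin, Nat.cast_mul] at this
    rwa [Nat.cast_prod_fin_pow_sub_pow Fintype.card_pos le_rfl,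
      Nat.cast_prod_fin_pow_sub_pow Fintype.card_pos htn,
      Nat.cast_prod_fin_pow_sub_pow Fintype.card_pos htm, prod_range_pow_sub_pow (by positivity),
      prod_range_pow_sub_pow (by positivity), prod_range_pow_sub_pow (by positivity)] at this
  have hN : N ≠ 0 := by
    rintro hN
    rw [hN, zero_mul] at hcount
    exact (mul_pos (mul_pos (hqpow n) (hPpos htn)) (mul_pos (hqpow m) (hPpos htm))).ne hcount
  have hlog := congrArg (logb q) hcount
  simp only [logb_mul hN (mul_pos (hqpow t) (hPpos le_rfl)).ne',
    logb_mul (mul_pos (hqpow n) (hPpos htn)).ne' (mul_pos (hqpow m) (hPpos htm)).ne',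
    logb_mul (hqpow _).ne' (hPpos htn).ne', logb_mul (hqpow _).ne' (hPpos htm).ne',
    logb_mul (hqpow _).ne' (hPpos le_rfl).ne', logb_pow, logb_self_eq_one hq] at hlog
  rw [prod_div_distrib, prod_mul_distrib, logb_div (hPpos le_rfl).ne'
    (mul_pos (hPpos htn) (hPpos htm)).ne', logb_mul (hPpos htn).ne' (hPpos htm).ne']
  simp only [amcCapacity]
  push_cast at hlog
  linarith

theorem tendsto_one_sub_zpow_atTop {i k : ℕ} (h : i < k) :
    Tendsto (fun q : ℝ => 1 - q ^ ((i : ℤ) - k)) atTop (𝓝 1) := by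
  simpa using (tendsto_const_nhds (x := (1 : ℝ))).sub
    (tendsto_zpow_atTop_zero (𝕜 := ℝ) (by omega : (i : ℤ) - k < 0))

theorem tendsto_prod_one_sub_zpow_div_atTop {n m t : ℕ} (htn : t ≤ n) (htm : t ≤ m) :
    Tendsto (fun q : ℝ => ∏ i ∈ range t,
      (1 - q ^ ((i : ℤ) - t)) / ((1 - q ^ ((i : ℤ) - n)) * (1 - q ^ ((i : ℤ) - m))))
      atTop (𝓝 1) := by
  have hfactor (i : ℕ) (hi : i ∈ range t) := (tendsto_one_sub_zpow_atTop (mem_range.1 hi)).div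
    ((tendsto_one_sub_zpow_atTop ((mem_range.1 hi).trans_le htn)).mul
      (tendsto_one_sub_zpow_atTop ((mem_range.1 hi).trans_le htm))) (by norm_num)
  simpa using tendsto_finsetProd (range t) hfactor

theorem tendsto_logb_atTop_of_tendsto_one {f : ℝ → ℝ} (hf : Tendsto f atTop (𝓝 1)) :
    Tendsto (fun q => logb q (f q)) atTop (𝓝 0) := by
  have hlog : Tendsto (fun q => log (f q)) atTop (𝓝 0) := by
    simpa using hf.log one_ne_zero
  simpa [logb, div_eq_mul_inv] using hlog.mul tendsto_log_atTop.inv_tendsto_atTop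

/-- the AMC capacity `C = nm - log_q |T_{n×m,t}|` satisfies
`C = (m-t)(n-t) + log_q ∏_{i=0}^{t-1} (1-q^{i-t})/((1-q^{i-n})(1-q^{i-m}))`, and for fixed
`n, m, t`, `lim_{q→∞} C = (m-t)(n-t)`. -/
theorem stmt_9 (F : Type) [Field F] [Fintype F] (n m t : ℕ) (ht : t ≤ min n m) :
    amcCapacity F n m t
      = ((m : ℝ) - t) * ((n : ℝ) - t) +
          Real.logb (Fintype.card F)
            (∏ i ∈ Finset.range t,
              (1 - (Fintype.card F : ℝ) ^ ((i : ℤ) - t)) /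
                ((1 - (Fintype.card F : ℝ) ^ ((i : ℤ) - n)) *
                  (1 - (Fintype.card F : ℝ) ^ ((i : ℤ) - m)))) ∧
    (∀ ε > (0 : ℝ), ∃ Q : ℕ,
      ∀ (F' : Type) [Field F'] [Fintype F'], Q < Fintype.card F' →
        |amcCapacity F' n m t - ((m : ℝ) - t) * ((n : ℝ) - t)| < ε) := by
  obtain ⟨htn, htm⟩ := le_min_iff.1 ht
  refine ⟨amcCapacity_eq F htn htm, fun ε hε => ?_⟩
  have hlim := (tendsto_logb_atTop_of_tendsto_one
    (tendsto_prod_one_sub_zpow_div_atTop htn htm)).comp tendsto_natCast_atTop_atTop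
  obtain ⟨Q, hQ⟩ := Metric.tendsto_atTop.1 hlim ε hε
  refine ⟨Q, fun F' _ _ hF' => ?_⟩
  rw [amcCapacity_eq F' htn htm, add_sub_cancel_left]
  simpa [Real.dist_eq] using hQ _ hF'.le
end
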